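/- arXiv:2602.23444 — 9 statements merged into one kernel-verified Lean document; each statement's English description precedes it below -/
import Mathlib

section
/- Let β ∈ [0,1), γ ≥ 0, η ∈ ℝ, and let sequences (x_k), (m_k), (g_k) in ℝ^d satisfy m_0 = 0, m_k = β m_{k-1} + (1-β) g_k and x_{k+1} = x_k - γ g_k - η m_k for all k ≥ 1. Define w_1 = x_1 and w_k = (x_k - β x_{k-1} + β γ g_{k-1})/(1-β) for k ≥ 2. Then for every k ≥ 1, w_{k+1} = w_k - (γ+η) g_k. -/
theorem stmt_0 {d : ℕ} (β γ η : ℝ) (hβ0 : 0 ≤ β) (hβ1 : β < 1) (hγ : 0 ≤ γ)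
    (x m g w : ℕ → EuclideanSpace ℝ (Fin d))
    (hm0 : m 0 = 0)
    (hm : ∀ k ≥ 1, m k = β • m (k - 1) + (1 - β) • g k)
    (hx : ∀ k ≥ 1, x (k + 1) = x k - γ • g k - η • m k)
    (hw1 : w 1 = x 1)
    (hw : ∀ k ≥ 2, w k = (1 - β)⁻¹ • (x k - β • x (k - 1) + (β * γ) • g (k - 1))) :
    ∀ k ≥ 1, w (k + 1) = w k - (γ + η) • g k := by
  have hb : (1 : ℝ) - β ≠ 0 := by linarith
  intro k hk
  rcases eq_or_lt_of_le hk with h1 | h2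
  · -- k = 1
    subst h1
    have hm1 : m 1 = β • m 0 + (1 - β) • g 1 := hm 1 le_rfl
    rw [hm0, smul_zero, zero_add] at hm1
    have hx1 : x 2 = x 1 - γ • g 1 - η • m 1 := hx 1 le_rfl
    have hw2 : w 2 = (1 - β)⁻¹ • (x 2 - β • x 1 + (β * γ) • g 1) := by
      simpa using hw 2 le_rfl
    rw [hw2, hx1, hm1, hw1]
    match_scalars <;> field_simp <;> ring
  · -- k ≥ 2
    obtain ⟨n, rfl⟩ : ∃ n, k = n + 2 := ⟨k - 2, by omega⟩
    have hwa : w (n + 3) = (1 - β)⁻¹ • (x (n + 3) - β • x (n + 2) + (β * γ) • g (n + 2)) := by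
      simpa using hw (n + 3) (by omega)
    have hwb : w (n + 2) = (1 - β)⁻¹ • (x (n + 2) - β • x (n + 1) + (β * γ) • g (n + 1)) := by
      simpa using hw (n + 2) (by omega)
    have hxa : x (n + 3) = x (n + 2) - γ • g (n + 2) - η • m (n + 2) := hx (n + 2) (by omega)
    have hxb : x (n + 2) = x (n + 1) - γ • g (n + 1) - η • m (n + 1) := hx (n + 1) (by omega)
    have hma : m (n + 2) = β • m (n + 1) + (1 - β) • g (n + 2) := by
      simpa using hm (n + 2) (by omega)
    rw [show n + 2 + 1 = n + 3 from rfl, hwa, hwb, hxa, hma, hxb]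
    match_scalars <;> field_simp <;> ring
end

section
/- Let β_k ∈ [0,1), γ_k = (1-β_k) η_{k-1}/β_k (with β_k ≠ 0, η_{k-1} ≠ 0), and let (x_k), (m_k), (g_k) satisfy the generalized SGDM recursion m_k = β_k m_{k-1} + (1-β_k) g_k, x_{k+1} = x_k - γ_k g_k - η_k m_k. Define y_{k+1} = x_k - γ_k g_k. Then for all k ≥ 2, x_{k+1} = y_{k+1} + (β_k η_k/η_{k-1})(y_{k+1} - y_k), i.e., the generalized SGDM reduces to SGD with Nesterov's momentum. -/
theorem stmt_3 {d : ℕ} (β γ η : ℕ → ℝ)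
    (hβ : ∀ k, 0 < β k ∧ β k < 1) (hη : ∀ k, η k ≠ 0)
    (hγ : ∀ k ≥ 1, γ k = (1 - β k) * η (k - 1) / β k)
    (x m g y : ℕ → EuclideanSpace ℝ (Fin d))
    (hm : ∀ k ≥ 1, m k = β k • m (k - 1) + (1 - β k) • g k)
    (hx : ∀ k ≥ 1, x (k + 1) = x k - γ k • g k - η k • m k)
    (hy : ∀ k ≥ 1, y (k + 1) = x k - γ k • g k) :
    ∀ k ≥ 2, x (k + 1) = y (k + 1) + (β k * η k / η (k - 1)) • (y (k + 1) - y k) := by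
  intro k hk
  obtain ⟨j, rfl⟩ : ∃ j, k = j + 2 := ⟨k - 2, by omega⟩
  have hb : β (j + 2) ≠ 0 := ne_of_gt (hβ (j + 2)).1
  have hη1 : η (j + 1) ≠ 0 := hη (j + 1)
  have hγ2 := hγ (j + 2) (by omega)
  have hm2 := hm (j + 2) (by omega)
  have hx2 := hx (j + 2) (by omega)
  have hx1 := hx (j + 1) (by omega)
  have hy2 := hy (j + 2) (by omega)
  have hy1 := hy (j + 1) (by omega)
  simp only [show j + 2 - 1 = j + 1 from rfl, show j + 1 + 1 = j + 2 from rfl] at hγ2 hm2 hx1 hy1 ⊢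
  rw [hx2, hy2, hy1, hm2, hx1, hγ2]
  match_scalars <;> field_simp <;> ring
end

section
/- Let β ∈ [0,1), α > 0, s ∈ [0, 1/(1-β)], and let (x_k), (m_k), (g_k) satisfy m_k = β m_{k-1} + (1-β) g_k, x_{k+1} = x_k - s α g_k - (α/(1-β) - s α) m_k. Define y_{k+1} = x_k - α g_k and z_{k+1} = x_k - s α g_k. Then for all k ≥ 2, x_{k+1} = y_{k+1} + β (z_{k+1} - z_k), i.e., the generalized SGDM with these parameter choices coincides with the stochastic unified momentum (SUM) method. -/
theorem stmt_4 {d : ℕ} (β α s : ℝ) (hβ0 : 0 ≤ β) (hβ1 : β < 1) (hα : 0 < α)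
    (hs0 : 0 ≤ s) (hs1 : s ≤ 1 / (1 - β))
    (x m g y z : ℕ → EuclideanSpace ℝ (Fin d))
    (hm : ∀ k ≥ 1, m k = β • m (k - 1) + (1 - β) • g k)
    (hx : ∀ k ≥ 1, x (k + 1) = x k - (s * α) • g k - (α / (1 - β) - s * α) • m k)
    (hy : ∀ k ≥ 1, y (k + 1) = x k - α • g k)
    (hz : ∀ k ≥ 1, z (k + 1) = x k - (s * α) • g k) :
    ∀ k ≥ 2, x (k + 1) = y (k + 1) + β • (z (k + 1) - z k) := by
  intro k hk
  have hk1 : k ≥ 1 := by omega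
  have hk1' : k - 1 ≥ 1 := by omega
  have ek : k - 1 + 1 = k := by omega
  have hb : (1 : ℝ) - β ≠ 0 := by linarith
  have hmk := hm k hk1
  have hxk := hx k hk1
  have hyk := hy k hk1
  have hzk := hz k hk1
  have hzk' := hz (k - 1) hk1'
  have hxk' := hx (k - 1) hk1'
  rw [ek] at hzk' hxk'
  rw [hxk, hyk, hzk, hzk', hxk', hmk]
  match_scalars <;> field_simp <;> ring
end

section
/- Let β ∈ [0,1), α, λ > 0, and let (x_k), (m_k), (g_k) satisfy m_k = β m_{k-1} + (1-β) g_k, x_{k+1} = x_k - α g_k - ((βα - λ)/(1-β)) m_k. Define y_{k+1} = x_k - α g_k. Then for all k ≥ 2, x_{k+1} = (1+β) y_{k+1} - β y_k + λ g_k, i.e., the generalized SGDM coincides with the MASS method. -/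
theorem stmt_5 {d : ℕ} (β α lam : ℝ) (hβ0 : 0 ≤ β) (hβ1 : β < 1)
    (hα : 0 < α) (hlam : 0 < lam)
    (x m g y : ℕ → EuclideanSpace ℝ (Fin d))
    (hm : ∀ k ≥ 1, m k = β • m (k - 1) + (1 - β) • g k)
    (hx : ∀ k ≥ 1, x (k + 1) = x k - α • g k - ((β * α - lam) / (1 - β)) • m k)
    (hy : ∀ k ≥ 1, y (k + 1) = x k - α • g k) :
    ∀ k ≥ 2, x (k + 1) = (1 + β) • y (k + 1) - β • y k + lam • g k := by
  intro k hk
  obtain ⟨n, rfl⟩ : ∃ n, k = n + 2 := ⟨k - 2, by omega⟩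
  have hβ : (1 : ℝ) - β ≠ 0 := by linarith
  have hm2 := hm (n + 2) (by omega)
  have hx2 := hx (n + 2) (by omega)
  have hx1 := hx (n + 1) (by omega)
  have hy2 := hy (n + 2) (by omega)
  have hy1 := hy (n + 1) (by omega)
  simp only [show n + 2 - 1 = n + 1 from rfl] at hm2
  rw [hx2, hm2, hy2, hy1, hx1]
  match_scalars <;> field_simp <;> ring
end

section
/- Let θ_k ∈ (0,1) be a sequence, and let parameters β_k, γ_k, η_k satisfy β_k η_k/η_{k-1} = θ_{k+1}(1/θ_k - 1) for all k ≥ 2. Let (x_k), (m_k), (g_k) satisfy m_0 = 0, m_k = β_k m_{k-1} + (1-β_k) g_k, x_{k+1} = x_k - γ_k g_k - η_k m_k. Define v_1 = x_1 and v_k = (x_k - (1-θ_k) x_{k-1} + (1-θ_k) γ_{k-1} g_{k-1})/θ_k for k ≥ 2. Then for every k ≥ 1, v_{k+1} = v_k - (γ_k + (1-β_k) η_k/θ_{k+1}) g_k. -/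
theorem stmt_6 {d : ℕ} (β γ η θ : ℕ → ℝ)
    (hβ : ∀ k, 0 ≤ β k ∧ β k < 1) (hγ : ∀ k, 0 ≤ γ k)
    (hθ : ∀ k ≥ 1, 0 < θ k ∧ θ k < 1)
    (hcouple : ∀ k ≥ 2, β k * η k / η (k - 1) = θ (k + 1) * (1 / θ k - 1))
    (x m g v : ℕ → EuclideanSpace ℝ (Fin d))
    (hm0 : m 0 = 0)
    (hm : ∀ k ≥ 1, m k = β k • m (k - 1) + (1 - β k) • g k)
    (hx : ∀ k ≥ 1, x (k + 1) = x k - γ k • g k - η k • m k)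
    (hv1 : v 1 = x 1)
    (hv : ∀ k ≥ 2, v k = (θ k)⁻¹ •
      (x k - (1 - θ k) • x (k - 1) + ((1 - θ k) * γ (k - 1)) • g (k - 1))) :
    ∀ k ≥ 1, v (k + 1) = v k - (γ k + (1 - β k) * η k / θ (k + 1)) • g k := by
  intro k hk
  obtain ⟨hθ1pos, hθ1lt⟩ := hθ (k + 1) (by omega)
  have hθ1ne : θ (k + 1) ≠ 0 := ne_of_gt hθ1pos
  rcases Nat.lt_or_ge k 2 with h2 | h2
  · -- k = 1
    interval_cases k
    rw [hv 2 (by norm_num), hx 1 (by norm_num), hm 1 (by norm_num), hv1]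
    norm_num [hm0]
    match_scalars <;> field_simp <;> ring
  · -- k ≥ 2
    obtain ⟨hθkpos, hθklt⟩ := hθ k (by omega)
    have hθkne : θ k ≠ 0 := ne_of_gt hθkpos
    have hc := hcouple k h2
    have hηne : η (k - 1) ≠ 0 := by
      intro h
      rw [h, div_zero] at hc
      have hpos : 0 < θ (k + 1) * (1 / θ k - 1) :=
        mul_pos hθ1pos (sub_pos.mpr (one_lt_one_div hθkpos hθklt))
      linarith [hc ▸ hpos]
    rw [div_eq_iff hηne] at hc
    have hc' : θ k * (β k * η k) = θ (k + 1) * (1 - θ k) * η (k - 1) := by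
      rw [hc]; field_simp
    have hxk : x k = x (k - 1) - γ (k - 1) • g (k - 1) - η (k - 1) • m (k - 1) := by
      have := hx (k - 1) (by omega)
      rwa [Nat.sub_add_cancel (by omega)] at this
    rw [hv (k + 1) (by omega), hv k h2, hx k (by omega), hm k (by omega)]
    simp only [Nat.add_sub_cancel]
    rw [hxk]
    clear hc
    set A := θ k with hA
    set B := θ (k + 1) with hB
    set E := η (k - 1) with hE
    match_scalars <;> field_simp <;> try ring
    linear_combination -hc'
end

section
/- Let f : ℝ^d → ℝ be convex, differentiable, and L-smooth with minimizer x*. Let β ∈ [0,1), γ ∈ [0, 1/L], and η satisfy -γ < η ≤ 1/L + ((2β-1)/(1-β)) γ. Let (x_k) be generated by the deterministic generalized SGDM: m_0 = 0, m_k = β m_{k-1} + (1-β) ∇f(x_k), x_{k+1} = x_k - γ ∇f(x_k) - η m_k, starting from x_1. Then for all t ≥ 1, the average x̄_t = (1/t) Σ_{k=1}^t x_k satisfies f(x̄_t) - f(x*) ≤ ‖x_1 - x*‖²/(2(γ+η)t) + β(f(x_1) - f(x*) + γ‖∇f(x_1)‖²/2)/((1-β)t). -/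
open Set Filter Topology Finset RealInnerProductSpace

section auxlemmas
variable {E : Type*} [NormedAddCommGroup E] [InnerProductSpace ℝ E] [CompleteSpace E]

private lemma sgdm_line_hasDerivAt (f : E → ℝ) (f' : E → E)
    (hgrad : ∀ p, HasGradientAt f (f' p) p) (x v : E) (t : ℝ) :
    HasDerivAt (fun τ : ℝ => f (x + τ • v)) ⟪f' (x + t • v), v⟫ t := by
  have hc : HasDerivAt (fun τ : ℝ => x + τ • v) v t := by
    simpa using ((hasDerivAt_id t).smul_const v).const_add x
  have hf := (hgrad (x + t • v)).hasFDerivAt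
  have := hf.comp_hasDerivAt t hc
  simp [InnerProductSpace.toDual_apply_apply] at this
  exact this

private lemma sgdm_first_order (f : E → ℝ) (f' : E → E) (hconv : ConvexOn ℝ Set.univ f)
    (hgrad : ∀ p, HasGradientAt f (f' p) p) (x y : E) :
    f x + ⟪f' x, y - x⟫ ≤ f y := by
  set v := y - x with hv
  have hd : HasDerivAt (fun τ : ℝ => f (x + τ • v)) ⟪f' x, v⟫ 0 := by
    simpa using sgdm_line_hasDerivAt f f' hgrad x v 0
  have hslope : ∀ τ : ℝ, τ ∈ Set.Ioc (0:ℝ) 1 →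
      slope (fun τ : ℝ => f (x + τ • v)) 0 τ ≤ f y - f x := by
    intro τ hτ
    have hcomb := hconv.2 (Set.mem_univ x) (Set.mem_univ y)
      (by linarith [hτ.2] : (0:ℝ) ≤ 1 - τ) (le_of_lt hτ.1) (by ring)
    have hpt : (1-τ) • x + τ • y = x + τ • v := by rw [hv]; module
    rw [hpt] at hcomb
    have h0 : f (x + (0:ℝ) • v) = f x := by simp
    rw [slope_def_field]
    simp only [sub_zero, h0]
    rw [div_le_iff₀ hτ.1]
    have : f (x + τ • v) ≤ (1-τ) * f x + τ * f y := by simpa using hcomb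
    nlinarith
  have h2 : Tendsto (slope (fun τ : ℝ => f (x + τ • v)) 0) (𝓝[>] 0) (𝓝 ⟪f' x, v⟫) :=
    (hasDerivAt_iff_tendsto_slope.mp hd).mono_left
      (nhdsWithin_mono _ (fun a ha => by simpa using ne_of_gt ha))
  have h3 : ⟪f' x, v⟫ ≤ f y - f x :=
    le_of_tendsto h2 (Filter.eventually_of_mem
      (Ioc_mem_nhdsGT_of_mem (by norm_num : (0:ℝ) ∈ Ico (0:ℝ) 1)) hslope)
  linarith

private lemma sgdm_descent (f : E → ℝ) (f' : E → E) (hgrad : ∀ p, HasGradientAt f (f' p) p)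
    {L : ℝ} (hsmooth : ∀ p q, ‖f' p - f' q‖ ≤ L * ‖p - q‖) (x y : E) :
    f y ≤ f x + ⟪f' x, y - x⟫ + L / 2 * ‖y - x‖ ^ 2 := by
  set v := y - x with hv
  set h : ℝ → ℝ := fun τ => f (x + τ • v) - τ * ⟪f' x, v⟫ - L/2 * τ^2 * ‖v‖^2 with hh
  have hderiv : ∀ t : ℝ, HasDerivAt h (⟪f' (x + t • v), v⟫ - ⟪f' x, v⟫ - L * t * ‖v‖^2) t := by
    intro t
    have h1 := sgdm_line_hasDerivAt f f' hgrad x v t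
    have h2 : HasDerivAt (fun τ : ℝ => τ * ⟪f' x, v⟫) ⟪f' x, v⟫ t := by
      simpa using (hasDerivAt_id t).mul_const (⟪f' x, v⟫ : ℝ)
    have h3 : HasDerivAt (fun τ : ℝ => L/2 * τ^2 * ‖v‖^2) (L * t * ‖v‖^2) t := by
      have := ((hasDerivAt_pow 2 t).const_mul (L/2)).mul_const (‖v‖^2)
      refine this.congr_deriv ?_
      ring
    exact (h1.sub h2).sub h3
  have anti : AntitoneOn h (Icc 0 1) := by
    apply antitoneOn_of_deriv_nonpos (convex_Icc 0 1)
    · exact fun t _ => ((hderiv t).continuousAt).continuousWithinAt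
    · exact fun t _ => (hderiv t).differentiableAt.differentiableWithinAt
    · intro t ht
      rw [interior_Icc] at ht
      rw [(hderiv t).deriv]
      have hb : ⟪f' (x + t • v) - f' x, v⟫ ≤ L * t * ‖v‖^2 := by
        calc ⟪f' (x + t • v) - f' x, v⟫ ≤ ‖f' (x + t • v) - f' x‖ * ‖v‖ :=
              real_inner_le_norm _ _
        _ ≤ (L * ‖(x + t • v) - x‖) * ‖v‖ := by
              have := hsmooth (x + t • v) x
              have hvn : (0:ℝ) ≤ ‖v‖ := norm_nonneg _
              nlinarith
        _ = L * t * ‖v‖^2 := by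
              rw [add_sub_cancel_left, norm_smul, Real.norm_eq_abs, abs_of_pos ht.1]
              ring
      rw [inner_sub_left] at hb
      linarith
  have h10 : h 1 ≤ h 0 := anti (by norm_num) (by norm_num) (by norm_num)
  have e1 : x + (1:ℝ) • v = y := by rw [hv]; module
  have e0 : x + (0:ℝ) • v = x := by module
  rw [hh] at h10
  simp only [e1, e0] at h10
  simp only [one_pow, one_mul, zero_mul, sub_zero] at h10
  nlinarith [h10]

private lemma sgdm_interp (f : E → ℝ) (f' : E → E) (hconv : ConvexOn ℝ Set.univ f)
    (hgrad : ∀ p, HasGradientAt f (f' p) p)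
    {L : ℝ} (hL : 0 < L) (hsmooth : ∀ p q, ‖f' p - f' q‖ ≤ L * ‖p - q‖) (x y : E) :
    f x + ⟪f' x, y - x⟫ + 1/(2*L) * ‖f' y - f' x‖^2 ≤ f y := by
  set Δ := f' y - f' x with hΔ
  set u := y - (1/L) • Δ with hu
  have h1 : f x + ⟪f' x, u - x⟫ ≤ f u := sgdm_first_order f f' hconv hgrad x u
  have h2 : f u ≤ f y + ⟪f' y, u - y⟫ + L/2 * ‖u - y‖^2 :=
    sgdm_descent f f' hgrad hsmooth y u
  have e1 : ⟪f' x, u - x⟫ = ⟪f' x, y - x⟫ - (1/L) * ⟪f' x, Δ⟫ := by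
    rw [hu, show y - (1/L) • Δ - x = (y - x) - (1/L) • Δ by abel, inner_sub_right,
      real_inner_smul_right]
  have e2 : ⟪f' y, u - y⟫ = -((1/L) * ⟪f' y, Δ⟫) := by
    rw [hu, show y - (1/L) • Δ - y = -((1/L) • Δ) by abel, inner_neg_right,
      real_inner_smul_right]
  have e3 : ‖u - y‖^2 = (1/L)^2 * ‖Δ‖^2 := by
    rw [hu, show y - (1/L) • Δ - y = -((1/L) • Δ) by abel, norm_neg, norm_smul,
      mul_pow, Real.norm_eq_abs, sq_abs]
  have e4 : ⟪f' y, Δ⟫ - ⟪f' x, Δ⟫ = ‖Δ‖^2 := by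
    rw [← inner_sub_left, ← hΔ, real_inner_self_eq_norm_sq]
  have hL' : L ≠ 0 := ne_of_gt hL
  rw [e1] at h1
  rw [e2, e3] at h2
  have hc : L/2 * ((1/L)^2 * ‖Δ‖^2) = 1/(2*L) * ‖Δ‖^2 := by field_simp
  rw [hc] at h2
  have e5 : (1/L) * ⟪f' y, Δ⟫ - (1/L) * ⟪f' x, Δ⟫ = (1/L) * ‖Δ‖^2 := by
    rw [← mul_sub, e4]
  have h1L : 1/(2*L) * ‖Δ‖^2 + 1/(2*L) * ‖Δ‖^2 = (1/L) * ‖Δ‖^2 := by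
    field_simp
    ring
  linarith

private lemma sgdm_step_arith (s q w γ ℓ F' Fk G Gk D I P1 P2 P3 A1 A2 : ℝ)
    (hs : 0 < s) (hq : 0 ≤ q) (hγ0 : 0 ≤ γ) (hγL : γ/2 ≤ ℓ)
    (hw : w = ℓ + q*γ/2 - s/2) (hw0 : 0 ≤ w)
    (hD : 0 ≤ D) (hGk : 0 ≤ Gk)
    (hI : I = P1 + q*P2 + (q*γ)*P3)
    (e1 : F' + ℓ*G ≤ P1)
    (e2 : F' - Fk + ℓ*D ≤ P2)
    (e3 : 2*P3 = G + Gk - D)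
    (hAe : A2 = A1 - 2*s*I + s^2*G) :
    F' + (A2/(2*s) + q*F' + w*G) ≤ A1/(2*s) + q*Fk + w*Gk := by
  have e2q : q*(F' - Fk + ℓ*D) ≤ q*P2 := mul_le_mul_of_nonneg_left e2 hq
  have e3q : (q*γ)*P3 = q*γ/2*G + q*γ/2*Gk - q*γ/2*D := by linear_combination (q*γ/2) * e3
  have hql : q*(γ/2 - ℓ) ≤ 0 := mul_nonpos_of_nonneg_of_nonpos hq (by linarith)
  have pd : q*(γ/2 - ℓ)*D ≤ 0 := mul_nonpos_of_nonpos_of_nonneg hql hD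
  have pg : 0 ≤ (w + q*γ/2)*Gk :=
    mul_nonneg (by nlinarith [mul_nonneg hq hγ0]) hGk
  have pwG : w*G = ℓ*G + q*γ/2*G - s/2*G := by rw [hw]; ring
  have pwGk : (w + q*γ/2)*Gk = w*Gk + q*γ/2*Gk := by ring
  have hs' : s ≠ 0 := ne_of_gt hs
  have hdiv : A2/(2*s) = A1/(2*s) - I + s/2*G := by rw [hAe]; field_simp
  nlinarith [e1, e2q, e3q, pd, pg, pwG, pwGk, hdiv, hI]

private lemma sgdm_base_arith (s q w γ ℓ F1 G1 I A1 A2 : ℝ) (hs : 0 < s)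
    (hw : w = ℓ + q*γ/2 - s/2)
    (e1 : F1 + ℓ*G1 ≤ I)
    (hAe : A2 = A1 - 2*s*I + s^2*G1) :
    F1 + (A2/(2*s) + q*F1 + w*G1) ≤ A1/(2*s) + q*F1 + (q*γ/2)*G1 := by
  have hs' : s ≠ 0 := ne_of_gt hs
  have hdiv : A2/(2*s) = A1/(2*s) - I + s/2*G1 := by rw [hAe]; field_simp
  have pwG : w*G1 = ℓ*G1 + q*γ/2*G1 - s/2*G1 := by rw [hw]; ring
  linarith

end auxlemmas
set_option maxHeartbeats 1000000 in
theorem stmt_8 {d : ℕ} (f : EuclideanSpace ℝ (Fin d) → ℝ)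
    (f' : EuclideanSpace ℝ (Fin d) → EuclideanSpace ℝ (Fin d))
    (L : ℝ) (hL : 0 < L)
    (hconv : ConvexOn ℝ Set.univ f)
    (hgrad : ∀ x, HasGradientAt f (f' x) x)
    (hsmooth : ∀ x y, ‖f' x - f' y‖ ≤ L * ‖x - y‖)
    (xs : EuclideanSpace ℝ (Fin d)) (hmin : ∀ y, f xs ≤ f y)
    (β γ η : ℝ) (hβ0 : 0 ≤ β) (hβ1 : β < 1)
    (hγ0 : 0 ≤ γ) (hγL : γ ≤ 1 / L)
    (hη1 : -γ < η) (hη2 : η ≤ 1 / L + ((2 * β - 1) / (1 - β)) * γ)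
    (x m : ℕ → EuclideanSpace ℝ (Fin d))
    (hm0 : m 0 = 0)
    (hm : ∀ k ≥ 1, m k = β • m (k - 1) + (1 - β) • f' (x k))
    (hx : ∀ k ≥ 1, x (k + 1) = x k - γ • f' (x k) - η • m k) :
    ∀ t : ℕ, 1 ≤ t → f ((t : ℝ)⁻¹ • ∑ k ∈ Icc 1 t, x k) - f xs ≤
      ‖x 1 - xs‖ ^ 2 / (2 * (γ + η) * t) +
      β * (f (x 1) - f xs + γ * ‖f' (x 1)‖ ^ 2 / 2) / ((1 - β) * t) := by
  intro t ht
  have h1β : (0:ℝ) < 1 - β := by linarith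
  have hs : (0:ℝ) < γ + η := by linarith
  set s : ℝ := γ + η with hsdef
  set q : ℝ := β / (1 - β) with hqdef
  have hq : 0 ≤ q := div_nonneg hβ0 (le_of_lt h1β)
  have hkey : (1 - β) * (1 + q) = 1 := by rw [hqdef]; field_simp; ring
  have hsL : s ≤ 1/L + q*γ := by
    have e : (2*β-1)/(1-β) = q - 1 := by rw [hqdef]; field_simp; ring
    rw [e] at hη2
    rw [hsdef]
    nlinarith
  set w : ℝ := 1/(2*L) + q*γ/2 - s/2 with hwdef
  have hw0 : 0 ≤ w := by
    rw [hwdef]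
    have : 1/(2*L) = (1/L)/2 := by ring
    nlinarith
  have hγL2 : γ/2 ≤ 1/(2*L) := by
    have : 1/(2*L) = (1/L)/2 := by ring
    linarith
  -- gradient at minimizer is zero
  have hgs : f' xs = 0 := by
    have hlm : IsLocalMin f xs :=
      (isMinOn_iff.mpr (fun y _ => hmin y)).isLocalMin Filter.univ_mem
    have h0 := hlm.hasFDerivAt_eq_zero (hgrad xs).hasFDerivAt
    have := congrArg (fun φ => (InnerProductSpace.toDual ℝ (EuclideanSpace ℝ (Fin d))).symm φ) h0
    simpa using this
  -- interpolation inequalities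
  have key1 : ∀ k : ℕ, (f (x k) - f xs) + 1/(2*L) * ‖f' (x k)‖^2
      ≤ ⟪f' (x k), x k - xs⟫ := by
    intro k
    have h := sgdm_interp f f' hconv hgrad hL hsmooth (x k) xs
    rw [hgs] at h
    have e1 : ‖(0:EuclideanSpace ℝ (Fin d)) - f' (x k)‖ = ‖f' (x k)‖ := by
      rw [zero_sub, norm_neg]
    rw [e1] at h
    have e2 : ⟪f' (x k), xs - x k⟫ = -⟪f' (x k), x k - xs⟫ := by
      rw [← inner_neg_right]
      congr 1
      abel
    rw [e2] at h
    linarith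
  have key2 : ∀ k : ℕ, (f (x (k+1)) - f xs) - (f (x k) - f xs)
      + 1/(2*L) * ‖f' (x (k+1)) - f' (x k)‖^2 ≤ ⟪f' (x (k+1)), x (k+1) - x k⟫ := by
    intro k
    have h := sgdm_interp f f' hconv hgrad hL hsmooth (x (k+1)) (x k)
    have e2 : ⟪f' (x (k+1)), x k - x (k+1)⟫ = -⟪f' (x (k+1)), x (k+1) - x k⟫ := by
      rw [← inner_neg_right]
      congr 1
      abel
    have e1 : ‖f' (x k) - f' (x (k+1))‖ = ‖f' (x (k+1)) - f' (x k)‖ := norm_sub_rev _ _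
    rw [e2, e1] at h
    linarith
  -- the auxiliary sequence
  set z : ℕ → EuclideanSpace ℝ (Fin d) := fun j => x j - (η*q) • m (j-1) with hzdef
  have hz1 : z 1 = x 1 := by
    show x 1 - (η*q) • m 0 = x 1
    rw [hm0, smul_zero, sub_zero]
  have hz : ∀ k : ℕ, 1 ≤ k → z (k+1) = z k - s • f' (x k) := by
    intro k hk
    show x (k+1) - (η*q) • m k = (x k - (η*q) • m (k-1)) - s • f' (x k)
    rw [hx k hk, hm k hk, hsdef]
    have hne : (1:ℝ) - β ≠ 0 := ne_of_gt h1β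
    rw [hqdef]
    match_scalars <;> (field_simp; try ring)
  have hzq : ∀ k : ℕ, 1 ≤ k →
      z (k+1) = x (k+1) + q • (x (k+1) - x k) + (q*γ) • f' (x k) := by
    intro k hk
    have hmk : η • m k = x k - x (k+1) - γ • f' (x k) := by
      rw [hx k hk]
      abel
    show x (k+1) - (η*q) • m k = _
    have e : (η*q) • m k = q • (η • m k) := by
      rw [smul_smul, mul_comm]
    rw [e, hmk]
    module
  -- expansion of the distance recursion
  have hA : ∀ k : ℕ, 1 ≤ k → ‖z (k+1) - xs‖^2
      = ‖z k - xs‖^2 - 2*s*⟪f' (x k), z k - xs⟫ + s^2 * ‖f' (x k)‖^2 := by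
    intro k hk
    rw [hz k hk, show z k - s • f' (x k) - xs = (z k - xs) - s • f' (x k) by abel]
    rw [@norm_sub_sq_real, real_inner_smul_right, norm_smul, Real.norm_eq_abs, mul_pow,
      sq_abs, real_inner_comm]
    ring
  -- per-step inequality
  have Istep : ∀ k : ℕ, 1 ≤ k →
      (f (x (k+1)) - f xs) + (‖z (k+1+1) - xs‖^2/(2*s) + q*(f (x (k+1)) - f xs)
        + w*‖f' (x (k+1))‖^2)
      ≤ ‖z (k+1) - xs‖^2/(2*s) + q*(f (x k) - f xs) + w*‖f' (x k)‖^2 := by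
    intro k hk
    have hAe := hA (k+1) (by omega)
    have hI : ⟪f' (x (k+1)), z (k+1) - xs⟫
        = ⟪f' (x (k+1)), x (k+1) - xs⟫ + q*⟪f' (x (k+1)), x (k+1) - x k⟫
          + (q*γ)*⟪f' (x (k+1)), f' (x k)⟫ := by
      rw [hzq k hk, show x (k+1) + q • (x (k+1) - x k) + (q*γ) • f' (x k) - xs
        = (x (k+1) - xs) + (q • (x (k+1) - x k) + (q*γ) • f' (x k)) by abel]
      rw [inner_add_right, inner_add_right, real_inner_smul_right, real_inner_smul_right]
      ring
    have e3 : 2*⟪f' (x (k+1)), f' (x k)⟫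
        = ‖f' (x (k+1))‖^2 + ‖f' (x k)‖^2 - ‖f' (x (k+1)) - f' (x k)‖^2 := by
      have := @norm_sub_sq_real _ _ _ (f' (x (k+1))) (f' (x k))
      linarith
    exact sgdm_step_arith s q w γ (1/(2*L)) _ _ _ _ _ _ _ _ _ _ _
      hs hq hγ0 hγL2 hwdef hw0 (by positivity) (by positivity)
      hI (key1 (k+1)) (key2 k) e3 hAe
  -- telescoping sum
  have main : ∀ u : ℕ, 1 ≤ u →
      (∑ k ∈ Icc 1 u, (f (x k) - f xs))
        + (‖z (u+1) - xs‖^2/(2*s) + q*(f (x u) - f xs) + w*‖f' (x u)‖^2)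
      ≤ ‖x 1 - xs‖^2/(2*s) + q*(f (x 1) - f xs) + (q*γ/2)*‖f' (x 1)‖^2 := by
    intro u hu
    induction u with
    | zero => omega
    | succ n ih =>
      rcases Nat.lt_or_ge n 1 with h1 | h2
      · -- n = 0 : base case u = 1
        have hn0 : n = 0 := by omega
        subst hn0
        simp only [Finset.Icc_self, Finset.sum_singleton]
        have hAe := hA 1 (le_refl 1)
        rw [hz1] at hAe
        exact sgdm_base_arith s q w γ (1/(2*L)) _ _ _ _ _ hs hwdef (key1 1) hAe
      · have ihn := ih h2
        rw [Finset.sum_Icc_succ_top (by omega : 1 ≤ n+1)]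
        have hst := Istep n h2
        linarith
  have hΨ : 0 ≤ ‖z (t+1) - xs‖^2/(2*s) + q*(f (x t) - f xs) + w*‖f' (x t)‖^2 := by
    have h1 : (0:ℝ) ≤ ‖z (t+1) - xs‖^2/(2*s) := by positivity
    have h2 : (0:ℝ) ≤ q*(f (x t) - f xs) :=
      mul_nonneg hq (by linarith [hmin (x t)])
    have h3 : (0:ℝ) ≤ w*‖f' (x t)‖^2 := mul_nonneg hw0 (by positivity)
    exact add_nonneg (add_nonneg h1 h2) h3
  have hsum : (∑ k ∈ Icc 1 t, (f (x k) - f xs))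
      ≤ ‖x 1 - xs‖^2/(2*s) + q*(f (x 1) - f xs) + (q*γ/2)*‖f' (x 1)‖^2 := by
    linarith [main t ht]
  -- Jensen's inequality
  have htR : (0:ℝ) < t := by exact_mod_cast Nat.pos_of_ne_zero (by omega)
  have hcard : (Finset.Icc 1 t).card = t := by rw [Nat.card_Icc]; omega
  have hJ : f ((t:ℝ)⁻¹ • ∑ k ∈ Icc 1 t, x k) ≤ ∑ k ∈ Icc 1 t, (t:ℝ)⁻¹ * f (x k) := by
    have happ := hconv.map_sum_le (t := Icc 1 t) (w := fun _ => (t:ℝ)⁻¹) (p := x)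
      (fun i _ => by positivity)
      (by rw [Finset.sum_const, hcard, nsmul_eq_mul, mul_inv_cancel₀ (ne_of_gt htR)])
      (fun i _ => Set.mem_univ _)
    have hsmul : ∑ k ∈ Icc 1 t, (t:ℝ)⁻¹ • x k = (t:ℝ)⁻¹ • ∑ k ∈ Icc 1 t, x k :=
      (Finset.smul_sum).symm
    rw [hsmul] at happ
    simpa [smul_eq_mul] using happ
  have hsum2 : ∑ k ∈ Icc 1 t, (t:ℝ)⁻¹ * f (x k)
      = (t:ℝ)⁻¹ * (∑ k ∈ Icc 1 t, (f (x k) - f xs)) + f xs := by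
    have e : ∑ k ∈ Icc 1 t, (f (x k) - f xs)
        = (∑ k ∈ Icc 1 t, f (x k)) - t * f xs := by
      rw [Finset.sum_sub_distrib, Finset.sum_const, hcard, nsmul_eq_mul]
    rw [e, ← Finset.mul_sum, mul_sub]
    have htne : ((t:ℕ):ℝ) ≠ 0 := ne_of_gt htR
    have e2 : (t:ℝ)⁻¹ * ((t:ℝ) * f xs) = f xs := by field_simp
    linarith
  have hmono : (t:ℝ)⁻¹ * (∑ k ∈ Icc 1 t, (f (x k) - f xs))
      ≤ (t:ℝ)⁻¹ * (‖x 1 - xs‖^2/(2*s) + q*(f (x 1) - f xs) + (q*γ/2)*‖f' (x 1)‖^2) :=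
    mul_le_mul_of_nonneg_left hsum (by positivity)
  have hfinal : (t:ℝ)⁻¹ * (‖x 1 - xs‖^2/(2*s) + q*(f (x 1) - f xs) + (q*γ/2)*‖f' (x 1)‖^2)
      = ‖x 1 - xs‖ ^ 2 / (2 * s * t)
        + β * (f (x 1) - f xs + γ * ‖f' (x 1)‖ ^ 2 / 2) / ((1 - β) * t) := by
    rw [hqdef]
    field_simp
    ring
  calc f ((t:ℝ)⁻¹ • ∑ k ∈ Icc 1 t, x k) - f xs
      ≤ (∑ k ∈ Icc 1 t, (t:ℝ)⁻¹ * f (x k)) - f xs := by linarith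
    _ = (t:ℝ)⁻¹ * (∑ k ∈ Icc 1 t, (f (x k) - f xs)) := by rw [hsum2]; ring
    _ ≤ _ := by rw [← hfinal] at *; linarith [hmono]
end

section
/- Let f : ℝ^d → ℝ be convex, differentiable, and L-smooth with minimizer x*. Let β ∈ [0,1) and 0 < η ≤ 1/L. Let (x_k) be generated by the deterministic heavy-ball method: m_0 = 0, m_k = β m_{k-1} + (1-β) ∇f(x_k), x_{k+1} = x_k - η m_k, starting from x_1. Then for all t ≥ 1, f((1/t) Σ_{k=1}^t x_k) - f(x*) ≤ ‖x_1-x*‖²/(2ηt) + β(f(x_1)-f(x*))/((1-β)t). -/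
open Finset

open RealInnerProductSpace

open RealInnerProductSpace

variable {E : Type*} [NormedAddCommGroup E] [InnerProductSpace ℝ E] [CompleteSpace E]

lemma hb_line_deriv {f : E → ℝ} {g : E} {p v : E} (hg : HasGradientAt f g p) (x : E) (t : ℝ)
    (hp : p = x + t • v) :
    HasDerivAt (fun s : ℝ => f (x + s • v)) ⟪g, v⟫ t := by
  have hc : HasDerivAt (fun s : ℝ => x + s • v) v t := by
    simpa using ((hasDerivAt_id t).smul_const v).const_add x
  have hf : HasFDerivAt f (InnerProductSpace.toDual ℝ E g) p := hasGradientAt_iff_hasFDerivAt.mp hg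
  rw [hp] at hf
  have := hf.comp_hasDerivAt t hc
  simp only [InnerProductSpace.toDual_apply_apply] at this
  exact this

lemma hb_grad_ineq {f : E → ℝ} (hconv : ConvexOn ℝ Set.univ f)
    {g : E} {p : E} (hg : HasGradientAt f g p) (y : E) :
    f p + ⟪g, y - p⟫ ≤ f y := by
  set v := y - p with hv
  have hφ : ConvexOn ℝ Set.univ (fun s : ℝ => f (p + s • v)) := by
    have := hconv.comp_affineMap (AffineMap.lineMap p y)
    have he : ∀ s : ℝ, (AffineMap.lineMap p y) s = p + s • v := by
      intro s; simp [AffineMap.lineMap_apply, hv]; module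
    simp only [Set.preimage_univ] at this
    refine (congrArg (ConvexOn ℝ Set.univ) ?_).mpr this
    funext s
    simp [Function.comp, he s]
  have hd : HasDerivAt (fun s : ℝ => f (p + s • v)) ⟪g, v⟫ 0 :=
    hb_line_deriv hg p 0 (by simp)
  have hsl := hφ.deriv_le_slope (Set.mem_univ (0:ℝ)) (Set.mem_univ (1:ℝ)) one_pos
    hd.differentiableAt
  rw [hd.deriv] at hsl
  rw [slope_def_field] at hsl
  have hy : p + (1:ℝ) • v = y := by simp [hv]
  have h0 : p + (0:ℝ) • v = p := by simp
  rw [hy, h0] at hsl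
  norm_num at hsl
  linarith

lemma hb_descent {f : E → ℝ} (gr : E → E) {L : ℝ} (hL : 0 < L)
    (hgrad : ∀ x, HasGradientAt f (gr x) x)
    (hsmooth : ∀ x y, ‖gr x - gr y‖ ≤ L * ‖x - y‖) (p y : E) :
    f y ≤ f p + ⟪gr p, y - p⟫ + L / 2 * ‖y - p‖ ^ 2 := by
  set v := y - p with hv
  set ψ : ℝ → ℝ := fun t => f (p + t • v) - t * ⟪gr p, v⟫ - L / 2 * ‖v‖ ^ 2 * t ^ 2 with hψ
  have hder : ∀ t : ℝ, HasDerivAt ψ (⟪gr (p + t • v), v⟫ - ⟪gr p, v⟫ - L * ‖v‖ ^ 2 * t) t := by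
    intro t
    have h1 : HasDerivAt (fun s : ℝ => f (p + s • v)) ⟪gr (p + t • v), v⟫ t :=
      hb_line_deriv (hgrad (p + t • v)) p t rfl
    have h2 : HasDerivAt (fun s : ℝ => s * ⟪gr p, v⟫) ⟪gr p, v⟫ t := by
      simpa using (hasDerivAt_id t).mul_const (⟪gr p, v⟫)
    have h3 : HasDerivAt (fun s : ℝ => L / 2 * ‖v‖ ^ 2 * s ^ 2) (L * ‖v‖ ^ 2 * t) t := by
      have := (hasDerivAt_pow 2 t).const_mul (L / 2 * ‖v‖ ^ 2)
      exact this.congr_deriv (by ring)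
    exact (h1.sub h2).sub h3
  have hmono : AntitoneOn ψ (Set.Ici (0:ℝ)) := by
    apply antitoneOn_of_deriv_nonpos (convex_Ici 0)
    · exact fun t _ => (hder t).continuousAt.continuousWithinAt
    · exact fun t _ => (hder t).differentiableAt.differentiableWithinAt
    · intro t ht
      rw [interior_Ici] at ht
      rw [(hder t).deriv]
      have h1 : ⟪gr (p + t • v) - gr p, v⟫ ≤ ‖gr (p + t • v) - gr p‖ * ‖v‖ :=
        real_inner_le_norm _ _
      have h2 : ‖gr (p + t • v) - gr p‖ ≤ L * (t * ‖v‖) := by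
        have := hsmooth (p + t • v) p
        simpa [norm_smul, abs_of_pos (show (0:ℝ) < t from ht)] using this
      have h3 : ⟪gr (p + t • v), v⟫ - ⟪gr p, v⟫ = ⟪gr (p + t • v) - gr p, v⟫ := by
        rw [inner_sub_left]
      have h4 : ‖gr (p + t • v) - gr p‖ * ‖v‖ ≤ L * (t * ‖v‖) * ‖v‖ :=
        mul_le_mul_of_nonneg_right h2 (norm_nonneg v)
      nlinarith [norm_nonneg v]
  have := hmono (Set.self_mem_Ici) (Set.mem_Ici.mpr zero_le_one) zero_le_one
  have h0 : ψ 0 = f p := by simp [hψ]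
  have h1 : ψ 1 = f y - ⟪gr p, v⟫ - L / 2 * ‖v‖ ^ 2 := by simp [hψ, hv]
  rw [h0, h1] at this
  linarith

lemma hb_grad_min_zero {f : E → ℝ} {gr : E} {xs : E}
    (hg : HasGradientAt f gr xs) (hmin : ∀ y, f xs ≤ f y) : gr = 0 := by
  have hloc : IsLocalMin f xs := by
    apply IsMinOn.isLocalMin (s := Set.univ)
    · intro y _; exact hmin y
    · exact Filter.univ_mem
  have hf : HasFDerivAt f (InnerProductSpace.toDual ℝ E gr) xs :=
    hasGradientAt_iff_hasFDerivAt.mp hg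
  have := hloc.hasFDerivAt_eq_zero hf
  have h2 : InnerProductSpace.toDual ℝ E gr = InnerProductSpace.toDual ℝ E 0 := by
    rw [this]; simp
  exact (InnerProductSpace.toDual ℝ E).injective h2

lemma hb_coco {f : E → ℝ} (gr : E → E) {L : ℝ} (hL : 0 < L)
    (hconv : ConvexOn ℝ Set.univ f)
    (hgrad : ∀ x, HasGradientAt f (gr x) x)
    (hsmooth : ∀ x y, ‖gr x - gr y‖ ≤ L * ‖x - y‖)
    {xs : E} (hmin : ∀ y, f xs ≤ f y) (y : E) :
    f y - f xs + 1 / (2 * L) * ‖gr y‖ ^ 2 ≤ ⟪gr y, y - xs⟫ := by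
  have hgz : gr xs = 0 := hb_grad_min_zero (hgrad xs) hmin
  set w : E := xs + (1 / L) • gr y with hw
  have h1 : f y + ⟪gr y, w - y⟫ ≤ f w := hb_grad_ineq hconv (hgrad y) w
  have h2 : f w ≤ f xs + ⟪gr xs, w - xs⟫ + L / 2 * ‖w - xs‖ ^ 2 :=
    hb_descent gr hL hgrad hsmooth xs w
  have hwx : w - xs = (1 / L) • gr y := by rw [hw]; abel
  have h3 : ⟪gr xs, w - xs⟫ = 0 := by rw [hgz]; simp
  have h4 : ‖w - xs‖ ^ 2 = (1 / L) ^ 2 * ‖gr y‖ ^ 2 := by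
    rw [hwx, norm_smul]
    rw [Real.norm_eq_abs, abs_of_pos (by positivity : (0:ℝ) < 1 / L)]
    ring
  have h5 : ⟪gr y, w - y⟫ = ⟪gr y, xs - y⟫ + (1 / L) * ‖gr y‖ ^ 2 := by
    have : w - y = (xs - y) + (1 / L) • gr y := by rw [hw]; abel
    rw [this, inner_add_right, real_inner_smul_right, real_inner_self_eq_norm_sq]
  have h6 : ⟪gr y, xs - y⟫ = -⟪gr y, y - xs⟫ := by
    rw [← inner_neg_right]; congr 1; abel
  have hLne : L ≠ 0 := ne_of_gt hL
  rw [h3, h4] at h2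
  rw [h5, h6] at h1
  have : L / 2 * ((1/L)^2 * ‖gr y‖^2) = 1 / (2*L) * ‖gr y‖^2 := by
    field_simp
  rw [this] at h2
  have h7 : (1/L) * ‖gr y‖^2 - 1/(2*L) * ‖gr y‖^2 = 1/(2*L) * ‖gr y‖^2 := by
    field_simp
    ring
  linarith

set_option maxHeartbeats 1000000 in
theorem stmt_9 {d : ℕ} (f : EuclideanSpace ℝ (Fin d) → ℝ)
    (f' : EuclideanSpace ℝ (Fin d) → EuclideanSpace ℝ (Fin d))
    (L : ℝ) (hL : 0 < L)
    (hconv : ConvexOn ℝ Set.univ f)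
    (hgrad : ∀ x, HasGradientAt f (f' x) x)
    (hsmooth : ∀ x y, ‖f' x - f' y‖ ≤ L * ‖x - y‖)
    (xs : EuclideanSpace ℝ (Fin d)) (hmin : ∀ y, f xs ≤ f y)
    (β η : ℝ) (hβ0 : 0 ≤ β) (hβ1 : β < 1)
    (hη0 : 0 < η) (hηL : η ≤ 1 / L)
    (x m : ℕ → EuclideanSpace ℝ (Fin d))
    (hm0 : m 0 = 0)
    (hm : ∀ k ≥ 1, m k = β • m (k - 1) + (1 - β) • f' (x k))
    (hx : ∀ k ≥ 1, x (k + 1) = x k - η • m k) :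
    ∀ t : ℕ, 1 ≤ t → f ((t : ℝ)⁻¹ • ∑ k ∈ Icc 1 t, x k) - f xs ≤
      ‖x 1 - xs‖ ^ 2 / (2 * η * t) +
      β * (f (x 1) - f xs) / ((1 - β) * t) := by
  have h1β : (0:ℝ) < 1 - β := by linarith
  have hne : (1:ℝ) - β ≠ 0 := ne_of_gt h1β
  set c : ℝ := η * β / (1 - β) with hc
  set z : ℕ → EuclideanSpace ℝ (Fin d) := fun k => x k - c • m (k - 1) with hzdef
  have hzval : ∀ j, z j = x j - c • m (j-1) := fun j => rfl
  have hz1 : z 1 = x 1 := by rw [hzval]; simp [hm0]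
  have hP : ∀ k : ℕ, 0 ≤ f (x k) - f xs := fun k => sub_nonneg.mpr (hmin (x k))
  -- one step inequality
  have step : ∀ k, 1 ≤ k → ‖z (k+1) - xs‖^2 ≤ ‖z k - xs‖^2 - 2*η*(f (x k) - f xs)
      + 2*η*(β/(1-β)) * ⟪f' (x k), η • m (k-1)⟫ := by
    intro k hk
    have e2 : (η + c) * (1 - β) = η := by rw [hc]; field_simp; ring
    have e1 : (η + c) * β = c := by linear_combination -e2
    have key2 : (η + c) • m k = c • m (k-1) + η • f' (x k) := by
      rw [hm k hk, smul_add, smul_smul, smul_smul, e1, e2]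
    have hzs : z (k+1) - xs = (z k - xs) - η • f' (x k) := by
      have : z (k+1) = z k - η • f' (x k) := by
        rw [hzval, hzval, Nat.add_sub_cancel, hx k hk]
        calc x k - η • m k - c • m k = x k - ((η + c) • m k) := by
              rw [add_smul]; abel
        _ = x k - (c • m (k-1) + η • f' (x k)) := by rw [key2]
        _ = (x k - c • m (k-1)) - η • f' (x k) := by abel
      rw [this]; abel
    have hexp : ‖z (k+1) - xs‖^2 = ‖z k - xs‖^2 - 2*η*⟪f' (x k), z k - xs⟫
        + η^2 * ‖f' (x k)‖^2 := by
      rw [hzs, norm_sub_sq_real, real_inner_smul_right, norm_smul, Real.norm_eq_abs,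
        abs_of_pos hη0, real_inner_comm]
      ring
    have hco := hb_coco f' hL hconv hgrad hsmooth hmin (x k)
    have hzk : ⟪f' (x k), z k - xs⟫ = ⟪f' (x k), x k - xs⟫ - c * ⟪f' (x k), m (k-1)⟫ := by
      have : z k - xs = (x k - xs) - c • m (k-1) := by
        rw [hzval]; abel
      rw [this, inner_sub_right, real_inner_smul_right]
    have hcoef : 2*η*(β/(1-β)) * ⟪f' (x k), η • m (k-1)⟫ = 2*η*(c * ⟪f' (x k), m (k-1)⟫) := by
      rw [real_inner_smul_right, hc]; field_simp
    have hηL2 : η * L ≤ 1 := by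
      rw [le_div_iff₀ hL] at hηL; linarith
    have hg2 : 0 ≤ ‖f' (x k)‖^2 := by positivity
    rw [hexp, hzk, hcoef]
    have h2η : (0:ℝ) ≤ 2*η := by positivity
    have keyx : η^2 * ‖f' (x k)‖^2 ≤ (η/L) * ‖f' (x k)‖^2 := by
      apply mul_le_mul_of_nonneg_right _ hg2
      rw [le_div_iff₀ hL]
      calc η^2 * L = η * (η*L) := by ring
      _ ≤ η * 1 := mul_le_mul_of_nonneg_left hηL2 hη0.le
      _ = η := mul_one η
    have hco2x : 2*η*(f (x k) - f xs) + (η/L)*‖f' (x k)‖^2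
        ≤ 2*η*⟪f' (x k), x k - xs⟫ := by
      have h := mul_le_mul_of_nonneg_left hco h2η
      have he : 2*η*(f (x k) - f xs + 1/(2*L)*‖f' (x k)‖^2)
          = 2*η*(f (x k) - f xs) + (η/L)*‖f' (x k)‖^2 := by
        field_simp
      rw [he] at h
      exact h
    linarith [keyx, hco2x]
  -- summed claim by induction
  have claim : ∀ t, 1 ≤ t →
      ‖z (t+1) - xs‖^2 + 2*η*(β/(1-β))*(f (x t) - f xs)
        + 2*η*∑ k ∈ Icc 1 t, (f (x k) - f xs)
      ≤ ‖x 1 - xs‖^2 + 2*η*(β/(1-β))*(f (x 1) - f xs) := by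
    intro t ht
    induction t, ht using Nat.le_induction with
    | base =>
      have h1 := step 1 le_rfl
      rw [hz1, hm0] at h1
      simp only [inner_zero_right, smul_zero] at h1
      simp only [Icc_self, sum_singleton]
      have h1' : ‖z 2 - xs‖^2 ≤ ‖x 1 - xs‖^2 - 2*η*(f (x 1) - f xs) := by
        simpa using h1
      linarith
    | succ t ht ih =>
      have hstep := step (t+1) (by omega)
      have hmt : η • m ((t+1)-1) = x t - x (t+1) := by
        rw [Nat.add_sub_cancel]
        rw [hx t ht]; abel
      rw [hmt] at hstep
      have hcvx : ⟪f' (x (t+1)), x t - x (t+1)⟫ ≤ f (x t) - f (x (t+1)) := by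
        have := hb_grad_ineq hconv (hgrad (x (t+1))) (x t)
        linarith
      have hcoef : (0:ℝ) ≤ 2*η*(β/(1-β)) := by positivity
      have hb := mul_le_mul_of_nonneg_left hcvx hcoef
      rw [sum_Icc_succ_top (by omega : 1 ≤ t+1)]
      have hsplit : 2*η*(β/(1-β))*(f (x t) - f (x (t+1)))
          = 2*η*(β/(1-β))*(f (x t) - f xs) - 2*η*(β/(1-β))*(f (x (t+1)) - f xs) := by ring
      nlinarith [hstep, ih, hb]
  intro t ht
  have htpos : (0:ℝ) < t := by exact_mod_cast ht
  have hA : (0:ℝ) ≤ 2*η*(β/(1-β)) := by positivity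
  have hsum : ∑ k ∈ Icc 1 t, (f (x k) - f xs)
      ≤ (‖x 1 - xs‖^2 + 2*η*(β/(1-β))*(f (x 1) - f xs)) / (2*η) := by
    have := claim t ht
    have hz2 : 0 ≤ ‖z (t+1) - xs‖^2 := by positivity
    have hPt : 0 ≤ 2*η*(β/(1-β))*(f (x t) - f xs) := mul_nonneg hA (hP t)
    rw [le_div_iff₀ (by positivity : (0:ℝ) < 2*η)]
    linarith
  -- Jensen
  have hcard : (Icc 1 t).card = t := by rw [Nat.card_Icc]; omega
  have hjen : f ((t : ℝ)⁻¹ • ∑ k ∈ Icc 1 t, x k)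
      ≤ ∑ k ∈ Icc 1 t, (t:ℝ)⁻¹ * f (x k) := by
    have hw : ∀ k ∈ Icc 1 t, (0:ℝ) ≤ (t:ℝ)⁻¹ := fun _ _ => by positivity
    have hw1 : ∑ _k ∈ Icc 1 t, (t:ℝ)⁻¹ = 1 := by
      rw [sum_const, hcard, nsmul_eq_mul, mul_inv_cancel₀ (ne_of_gt htpos)]
    have hmem : ∀ k ∈ Icc 1 t, x k ∈ (Set.univ : Set (EuclideanSpace ℝ (Fin d))) :=
      fun _ _ => Set.mem_univ _
    have := hconv.map_sum_le hw hw1 hmem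
    rw [smul_sum]
    exact this
  have hsplit : ∑ k ∈ Icc 1 t, (t:ℝ)⁻¹ * f (x k)
      = (t:ℝ)⁻¹ * ∑ k ∈ Icc 1 t, (f (x k) - f xs) + f xs := by
    rw [← mul_sum]
    rw [sum_sub_distrib, sum_const, hcard]
    field_simp
    ring
  have hfinal : f ((t : ℝ)⁻¹ • ∑ k ∈ Icc 1 t, x k) - f xs
      ≤ (t:ℝ)⁻¹ * ((‖x 1 - xs‖^2 + 2*η*(β/(1-β))*(f (x 1) - f xs)) / (2*η)) := by
    have h1 : f ((t : ℝ)⁻¹ • ∑ k ∈ Icc 1 t, x k) - f xs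
        ≤ (t:ℝ)⁻¹ * ∑ k ∈ Icc 1 t, (f (x k) - f xs) := by
      rw [hsplit] at hjen; linarith
    have h2 := mul_le_mul_of_nonneg_left hsum (by positivity : (0:ℝ) ≤ (t:ℝ)⁻¹)
    linarith
  have heq : (t:ℝ)⁻¹ * ((‖x 1 - xs‖^2 + 2*η*(β/(1-β))*(f (x 1) - f xs)) / (2*η))
      = ‖x 1 - xs‖ ^ 2 / (2 * η * t) + β * (f (x 1) - f xs) / ((1 - β) * t) := by
    field_simp
  rw [heq] at hfinal
  exact hfinal
end

section
/- Let f : ℝ^d → ℝ be differentiable and L-smooth, with a minimizer value f* = inf f attained. Let β ∈ [0,1), γ ≥ 0, η > 0 with 0 < γ + η ≤ (1-β)/(3L). Let (x_k) be generated by the deterministic generalized SGDM with exact gradients: m_0 = 0, m_k = β m_{k-1} + (1-β) ∇f(x_k), x_{k+1} = x_k - γ ∇f(x_k) - η m_k. Then for all t ≥ 1, (1/t) Σ_{k=1}^t ‖∇f(x_k)‖² ≤ 2(f(x_1) - f*)/((γ+η)t). -/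
open Finset
open RealInnerProductSpace

variable {d : ℕ}

local notation "E" => EuclideanSpace ℝ (Fin d)


lemma sq_convex_bound (β p a b : ℝ) (hβ0 : 0 ≤ β) (hβ1 : β ≤ 1) (hp : 0 ≤ p)
    (ha : 0 ≤ a) (hb : 0 ≤ b) (h : p ≤ β * a + (1 - β) * b) :
    p ^ 2 ≤ β * a ^ 2 + (1 - β) * b ^ 2 := by
  nlinarith [sq_nonneg (a - b), mul_nonneg hβ0 (sub_nonneg.mpr hβ1)]

lemma step_arith (L α c A β a b F G I M : ℝ) (hL : 0 ≤ L) (hα : 0 < α) (hc : 0 ≤ c)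
    (hA : 0 ≤ A) (hβ0 : 0 ≤ β) (ha : 0 ≤ a) (hb : 0 ≤ b)
    (hA1 : A * (1 - β) = α * L * c / 2) (hLb : L * (2 * c + α) ≤ 1)
    (hd : G ≤ F + -(α * I) + L / 2 * (α ^ 2 * b ^ 2))
    (hib : b ^ 2 - L * (c * a) * b ≤ I)
    (hAm : M ≤ β * a ^ 2 + (1 - β) * b ^ 2) :
    G + A * M + α / 2 * b ^ 2 ≤ F + A * a ^ 2 := by
  have hy : L * (c * a) * b ≤ L * c / 2 * (a ^ 2 + b ^ 2) := by
    nlinarith [sq_nonneg (a - b), mul_nonneg hL hc]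
  have P1 := mul_le_mul_of_nonneg_left hib hα.le
  have P2 := mul_le_mul_of_nonneg_left hy hα.le
  have P3 := mul_le_mul_of_nonneg_left hAm hA
  have P4 := mul_le_mul_of_nonneg_left hLb (by positivity : (0:ℝ) ≤ α * b ^ 2 / 2)
  have P5 : A * (1 - β) * b ^ 2 = α * L * c / 2 * b ^ 2 := by rw [hA1]
  have P6 : A * (1 - β) * a ^ 2 = α * L * c / 2 * a ^ 2 := by rw [hA1]
  nlinarith [P1, P2, P3, P4, P5, P6, hd]

theorem descent_lemma (f : E → ℝ) (f' : E → E) (L : ℝ) (hL : 0 ≤ L)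
    (hgrad : ∀ x, HasGradientAt f (f' x) x)
    (hsmooth : ∀ x y, ‖f' x - f' y‖ ≤ L * ‖x - y‖) (x y : E) :
    f y ≤ f x + ⟪f' x, y - x⟫ + L / 2 * ‖y - x‖ ^ 2 := by
  set v := y - x with hv
  set φ : ℝ → ℝ := fun t => f (x + t • v) - t * ⟪f' x, v⟫ - L / 2 * t ^ 2 * ‖v‖ ^ 2 with hφ
  have hder : ∀ t : ℝ, HasDerivAt φ (⟪f' (x + t • v), v⟫ - ⟪f' x, v⟫ - L * t * ‖v‖ ^ 2) t := by
    intro t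
    have h1 : HasDerivAt (fun t : ℝ => x + t • v) v t := by
      simpa using ((hasDerivAt_id t).smul_const v).const_add x
    have h2 : HasFDerivAt f ((InnerProductSpace.toDual ℝ E) (f' (x + t • v))) (x + t • v) :=
      (hgrad (x + t • v)).hasFDerivAt
    have h3 : HasDerivAt (fun t : ℝ => f (x + t • v)) (⟪f' (x + t • v), v⟫) t := by
      exact (h2.comp_hasDerivAt t h1).congr_deriv (by simp)
    have h4 : HasDerivAt (fun t : ℝ => t * ⟪f' x, v⟫) (⟪f' x, v⟫) t := by
      simpa using (hasDerivAt_id t).mul_const (⟪f' x, v⟫)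
    have h5 : HasDerivAt (fun t : ℝ => L / 2 * t ^ 2 * ‖v‖ ^ 2) (L * t * ‖v‖ ^ 2) t := by
      have := ((hasDerivAt_pow 2 t).const_mul (L / 2)).mul_const (‖v‖ ^ 2)
      refine this.congr_deriv ?_
      ring
    exact (h3.sub h4).sub h5
  have hmono : AntitoneOn φ (Set.Icc 0 1) := by
    apply antitoneOn_of_deriv_nonpos (convex_Icc 0 1)
    · exact (Differentiable.continuous (fun t => (hder t).differentiableAt)).continuousOn
    · intro t ht
      exact (hder t).differentiableAt.differentiableWithinAt
    · intro t ht
      rw [interior_Icc] at ht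
      rw [(hder t).deriv]
      have hb : ⟪f' (x + t • v) - f' x, v⟫ ≤ L * t * ‖v‖ ^ 2 := by
        calc ⟪f' (x + t • v) - f' x, v⟫ ≤ ‖f' (x + t • v) - f' x‖ * ‖v‖ := real_inner_le_norm _ _
          _ ≤ (L * ‖(x + t • v) - x‖) * ‖v‖ := by
              have := hsmooth (x + t • v) x
              nlinarith [norm_nonneg v]
          _ = L * t * ‖v‖ ^ 2 := by
              simp [norm_smul, abs_of_pos ht.1]
              ring
      rw [inner_sub_left] at hb
      linarith
  have h01 := hmono (Set.mem_Icc.2 ⟨le_refl 0, zero_le_one⟩) (Set.mem_Icc.2 ⟨zero_le_one, le_refl 1⟩) zero_le_one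
  have h0 : φ 0 = f x := by simp [hφ]
  have h1 : φ 1 = f y - ⟪f' x, v⟫ - L / 2 * ‖v‖ ^ 2 := by
    have hxy : x + (1 : ℝ) • v = y := by simp [hv]
    simp only [hφ, one_smul, one_pow, one_mul, hxy]
    have : x + v = y := by simpa using hxy
    rw [this]; ring
  rw [h0, h1] at h01
  linarith

theorem stmt_16 {d : ℕ} (f : EuclideanSpace ℝ (Fin d) → ℝ)
    (f' : EuclideanSpace ℝ (Fin d) → EuclideanSpace ℝ (Fin d))
    (L : ℝ) (hL : 0 < L)
    (hgrad : ∀ x, HasGradientAt f (f' x) x)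
    (hsmooth : ∀ x y, ‖f' x - f' y‖ ≤ L * ‖x - y‖)
    (xs : EuclideanSpace ℝ (Fin d)) (hmin : ∀ y, f xs ≤ f y)
    (β γ η : ℝ) (hβ0 : 0 ≤ β) (hβ1 : β < 1)
    (hγ0 : 0 ≤ γ) (hη0 : 0 < η)
    (hsum : γ + η ≤ (1 - β) / (3 * L))
    (x m : ℕ → EuclideanSpace ℝ (Fin d))
    (hm0 : m 0 = 0)
    (hm : ∀ k ≥ 1, m k = β • m (k - 1) + (1 - β) • f' (x k))
    (hx : ∀ k ≥ 1, x (k + 1) = x k - γ • f' (x k) - η • m k) :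
    ∀ t : ℕ, 1 ≤ t →
      (t : ℝ)⁻¹ * ∑ k ∈ Icc 1 t, ‖f' (x k)‖ ^ 2 ≤
        2 * (f (x 1) - f xs) / ((γ + η) * t) := by
  have hβ' : 0 < 1 - β := by linarith
  obtain ⟨α, hαdef⟩ : ∃ α : ℝ, α = γ + η := ⟨_, rfl⟩
  have hα : 0 < α := by rw [hαdef]; positivity
  obtain ⟨c, hcdef⟩ : ∃ c : ℝ, c = η * β / (1 - β) := ⟨_, rfl⟩
  have hc : 0 ≤ c := by rw [hcdef]; positivity
  have hc1 : c * (1 - β) = η * β := by rw [hcdef]; field_simp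
  obtain ⟨A, hAdef⟩ : ∃ A : ℝ, A = α * L * c / (2 * (1 - β)) := ⟨_, rfl⟩
  have hA : 0 ≤ A := by rw [hAdef]; positivity
  have hA1 : A * (1 - β) = α * L * c / 2 := by rw [hAdef]; field_simp
  have hηα : η ≤ α := by rw [hαdef]; linarith
  -- step size bound
  have h3 : α * (3 * L) ≤ 1 - β := by
    rw [hαdef]; exact (le_div_iff₀ (by positivity)).mp hsum
  have hLb : L * (2 * c + α) ≤ 1 := by
    have hc1L : L * (c * (1 - β)) = L * (η * β) := by rw [hc1]
    have f1 : L * η * β ≤ L * α * β :=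
      mul_le_mul_of_nonneg_right (mul_le_mul_of_nonneg_left hηα hL.le) hβ0
    have f2 : α * (3 * L) * β ≤ (1 - β) * β := mul_le_mul_of_nonneg_right h3 hβ0
    have hLc : L * c * (1 - β) ≤ (1 - β) * β / 3 := by linarith [hc1L, f1, f2]
    have hLc2 : L * c ≤ β / 3 := by nlinarith [hLc, hβ']
    have hLα : L * α ≤ (1 - β) / 3 := by linarith [h3]
    linarith
  set g : ℕ → EuclideanSpace ℝ (Fin d) := fun k => f' (x k) with hgdef
  obtain ⟨z, hzdef⟩ : ∃ z : ℕ → EuclideanSpace ℝ (Fin d),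
      z = fun k => x k - c • m (k - 1) := ⟨_, rfl⟩
  have hz1 : z 1 = x 1 := by simp [hzdef, hm0]
  have hzx : ∀ k, z k - x k = -(c • m (k - 1)) := by intro k; simp [hzdef]
  have hzrec : ∀ k ≥ 1, z (k + 1) = z k - α • g k := by
    intro k hk
    have hk1 : (k + 1) - 1 = k := by omega
    simp only [hzdef, hk1]
    rw [hx k hk, hm k hk]
    have e1' : η * β + c * β = c := by linear_combination -hc1
    have e2' : γ + η - η * β + c - c * β = α := by linear_combination hc1 - hαdef
    simp only [hgdef]
    match_scalars <;> linarith [e1', e2']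
  have hmsq : ∀ k ≥ 1, ‖m k‖ ^ 2 ≤ β * ‖m (k - 1)‖ ^ 2 + (1 - β) * ‖g k‖ ^ 2 := by
    intro k hk
    have h1 : ‖m k‖ ≤ β * ‖m (k - 1)‖ + (1 - β) * ‖g k‖ := by
      rw [hm k hk]
      refine (norm_add_le _ _).trans ?_
      rw [norm_smul, norm_smul, Real.norm_eq_abs, Real.norm_eq_abs,
        abs_of_nonneg hβ0, abs_of_nonneg hβ'.le]
    exact sq_convex_bound β ‖m k‖ ‖m (k - 1)‖ ‖g k‖ hβ0 hβ1.le (norm_nonneg _)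
      (norm_nonneg _) (norm_nonneg _) h1
  -- one-step Lyapunov descent
  have hstep : ∀ k ≥ 1, f (z (k + 1)) + A * ‖m k‖ ^ 2 + α / 2 * ‖g k‖ ^ 2 ≤
      f (z k) + A * ‖m (k - 1)‖ ^ 2 := by
    intro k hk
    have hd := descent_lemma f f' L hL.le hgrad hsmooth (z k) (z (k + 1))
    have hdz : z (k + 1) - z k = -(α • g k) := by rw [hzrec k hk]; abel
    rw [hdz] at hd
    have hip : ⟪f' (z k), -(α • g k)⟫ = -(α * ⟪f' (z k), g k⟫) := by
      rw [inner_neg_right, real_inner_smul_right]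
    have hnrm : ‖-(α • g k)‖ ^ 2 = α ^ 2 * ‖g k‖ ^ 2 := by
      rw [norm_neg, norm_smul, Real.norm_eq_abs, abs_of_pos hα, mul_pow]
    rw [hip, hnrm] at hd
    have hsm : ‖f' (z k) - g k‖ ≤ L * (c * ‖m (k - 1)‖) := by
      have h := hsmooth (z k) (x k)
      rw [hzx k, norm_neg, norm_smul, Real.norm_eq_abs, abs_of_nonneg hc] at h
      exact h
    have hinner : ‖g k‖ ^ 2 - ‖f' (z k) - g k‖ * ‖g k‖ ≤ ⟪f' (z k), g k⟫ := by
      have h1 : |⟪f' (z k) - g k, g k⟫| ≤ ‖f' (z k) - g k‖ * ‖g k‖ :=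
        abs_real_inner_le_norm _ _
      have h2 : ⟪f' (z k), g k⟫ = ⟪f' (z k) - g k, g k⟫ + ‖g k‖ ^ 2 := by
        rw [inner_sub_left, real_inner_self_eq_norm_sq]; ring
      rw [h2]
      linarith [(abs_le.mp h1).1]
    have hib : ‖g k‖ ^ 2 - L * (c * ‖m (k - 1)‖) * ‖g k‖ ≤ ⟪f' (z k), g k⟫ := by
      have h := mul_le_mul_of_nonneg_right hsm (norm_nonneg (g k))
      linarith
    exact step_arith L α c A β ‖m (k - 1)‖ ‖g k‖ (f (z k)) (f (z (k + 1)))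
      (⟪f' (z k), g k⟫) (‖m k‖ ^ 2) hL.le hα hc hA hβ0 (norm_nonneg _) (norm_nonneg _)
      hA1 hLb hd hib (hmsq k hk)
  -- telescoping
  have hkey : ∀ t : ℕ, 1 ≤ t →
      f (z (t + 1)) + A * ‖m t‖ ^ 2 + α / 2 * ∑ k ∈ Icc 1 t, ‖g k‖ ^ 2 ≤ f (x 1) := by
    intro t ht
    induction t with
    | zero => omega
    | succ n ih =>
      rcases Nat.lt_or_ge n 1 with h1 | h1
      · have hn0 : n = 0 := by omega
        subst hn0
        simpa [hz1, hm0] using hstep 1 le_rfl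
      · have ihn := ih h1
        have hs := hstep (n + 1) (by omega)
        have he : (n + 1) - 1 = n := by omega
        rw [he] at hs
        rw [Finset.sum_Icc_succ_top (by omega : 1 ≤ n + 1)]
        linarith
  -- conclusion
  intro t ht
  have hk := hkey t ht
  have hfz : f xs ≤ f (z (t + 1)) := hmin _
  have hsumle : ∑ k ∈ Icc 1 t, ‖g k‖ ^ 2 ≤ 2 * (f (x 1) - f xs) / α := by
    rw [le_div_iff₀ hα]
    nlinarith [mul_nonneg hA (sq_nonneg ‖m t‖)]
  have ht0 : (0:ℝ) < (t : ℝ) := by exact_mod_cast ht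
  have h2 : (t : ℝ)⁻¹ * ∑ k ∈ Icc 1 t, ‖g k‖ ^ 2 ≤ (t : ℝ)⁻¹ * (2 * (f (x 1) - f xs) / α) :=
    mul_le_mul_of_nonneg_left hsumle (by positivity)
  rw [← hαdef]
  calc (t : ℝ)⁻¹ * ∑ k ∈ Icc 1 t, ‖f' (x k)‖ ^ 2
      = (t : ℝ)⁻¹ * ∑ k ∈ Icc 1 t, ‖g k‖ ^ 2 := by simp [hgdef]
    _ ≤ (t : ℝ)⁻¹ * (2 * (f (x 1) - f xs) / α) := h2
    _ = 2 * (f (x 1) - f xs) / (α * t) := by rw [← div_div]; ring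
end

section
/- Let L ≥ μ > 0, β ∈ [0,1), γ ≥ 0, η > 0 with 0 < γ + η ≤ min{(1-β)/(2L), (1-β)/(8β²L)} (interpreting the second bound as +∞ when β = 0). Define M = (γ+η) - L(γ+η)²/(1-β) - L(γ+η)²/2 and C = (β²Lη²/2 + Mμ(μ+L)β²η²/(1-β)) / (1 - β - μM + μ(μ+L)β²η²/(1-β)). Then (γ+η)/4 ≤ M ≤ (1-β)/(2μ), C ≥ 0, and (γ+η)/18 ≤ M - C ≤ (1-β)/(2μ). -/
set_option maxHeartbeats 2000000


theorem stmt_17 (L μ β γ η M C : ℝ)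
    (hμ : 0 < μ) (hμL : μ ≤ L)
    (hβ0 : 0 ≤ β) (hβ1 : β < 1) (hγ : 0 ≤ γ) (hη : 0 < η)
    (hsum1 : γ + η ≤ (1 - β) / (2 * L))
    (hsum2 : β ≠ 0 → γ + η ≤ (1 - β) / (8 * β ^ 2 * L))
    (hM : M = (γ + η) - L * (γ + η) ^ 2 / (1 - β) - L * (γ + η) ^ 2 / 2)
    (hC : C = (β ^ 2 * L * η ^ 2 / 2 + M * μ * (μ + L) * β ^ 2 * η ^ 2 / (1 - β)) /
      (1 - β - μ * M + μ * (μ + L) * β ^ 2 * η ^ 2 / (1 - β))) :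
    (γ + η) / 4 ≤ M ∧ M ≤ (1 - β) / (2 * μ) ∧ 0 ≤ C ∧
      (γ + η) / 18 ≤ M - C ∧ M - C ≤ (1 - β) / (2 * μ) := by
  set s := γ + η with hs_def
  have hb : (0:ℝ) < 1 - β := by linarith
  have hb1 : 1 - β ≤ 1 := by linarith
  have hs : 0 < s := by rw [hs_def]; positivity
  have hηs : η ≤ s := by rw [hs_def]; linarith
  clear_value s
  have hL : 0 < L := lt_of_lt_of_le hμ hμL
  -- 2 L s ≤ 1 - β
  have hLs : 2 * (L * s) ≤ 1 - β := by
    have := (le_div_iff₀ (by positivity : (0:ℝ) < 2 * L)).mp hsum1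
    nlinarith
  -- 8 β² L s ≤ 1 - β
  have hβLs : 8 * (β ^ 2 * L * s) ≤ 1 - β := by
    by_cases hβ : β = 0
    · rw [hβ]; nlinarith
    · have hβpos : 0 < β := lt_of_le_of_ne hβ0 (Ne.symm hβ)
      have := (le_div_iff₀ (by positivity : (0:ℝ) < 8 * β ^ 2 * L)).mp (hsum2 hβ)
      nlinarith
  -- M bounds
  have h1 : L * s ^ 2 / (1 - β) ≤ s / 2 := by
    rw [div_le_iff₀ hb]; nlinarith [mul_le_mul_of_nonneg_right hLs hs.le]
  have h2 : L * s ^ 2 / 2 ≤ s / 4 := by nlinarith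
  have hM4 : s / 4 ≤ M := by rw [hM]; linarith
  have hMs : M ≤ s := by
    have : 0 ≤ L * s ^ 2 / (1 - β) := by positivity
    have : 0 ≤ L * s ^ 2 / 2 := by positivity
    rw [hM]; linarith
  have hM0 : 0 < M := lt_of_lt_of_le (by positivity) hM4
  have hμM : 2 * (μ * M) ≤ 1 - β := by nlinarith
  have hMub : M ≤ (1 - β) / (2 * μ) := by
    rw [le_div_iff₀ (by positivity)]; nlinarith
  -- K and N'
  set K := μ * (μ + L) * β ^ 2 * η ^ 2 / (1 - β) with hK_def
  have hK0 : 0 ≤ K := by positivity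
  have hη2 : η ^ 2 ≤ s ^ 2 := by nlinarith
  have hA : μ * (μ + L) ≤ 2 * L ^ 2 := by nlinarith
  have hK : K ≤ (1 - β) / 8 := by
    have hmul : (8 * (β ^ 2 * L * s)) * (2 * (L * s)) ≤ (1 - β) * (1 - β) :=
      mul_le_mul hβLs hLs (by positivity) (by linarith)
    have hmul2 : (μ * (μ + L)) * η ^ 2 ≤ (2 * L ^ 2) * s ^ 2 :=
      mul_le_mul hA hη2 (by positivity) (by positivity)
    have hmul3 := mul_le_mul_of_nonneg_left hmul2 (by positivity : (0:ℝ) ≤ β ^ 2)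
    rw [hK_def, div_le_div_iff₀ hb (by norm_num : (0:ℝ) < 8)]
    nlinarith [hmul, hmul3]
  have hN' : β ^ 2 * L * η ^ 2 ≤ (1 - β) * s / 8 := by
    nlinarith [mul_le_mul_of_nonneg_right hβLs hs.le, mul_le_mul_of_nonneg_left hη2 (by positivity : (0:ℝ) ≤ β ^ 2 * L)]
  set D := 1 - β - μ * M + K with hD_def
  have hD2 : (1 - β) / 2 ≤ D := by rw [hD_def]; linarith
  have hDpos : 0 < D := lt_of_lt_of_le (by positivity) hD2
  have hDub : D ≤ 9 * (1 - β) / 8 := by rw [hD_def]; nlinarith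
  have hC' : C = (β ^ 2 * L * η ^ 2 / 2 + M * K) / D := by
    rw [hC, hK_def, hD_def]; ring_nf
  have hC0 : 0 ≤ C := by
    rw [hC']
    apply div_nonneg _ hDpos.le
    have : 0 ≤ M * K := mul_nonneg hM0.le hK0
    positivity
  -- M - C
  have hMC : M - C = (M * (1 - β - μ * M) - β ^ 2 * L * η ^ 2 / 2) / D := by
    rw [hC']
    field_simp
    ring
  have hnum : s * (1 - β) / 16 ≤ M * (1 - β - μ * M) - β ^ 2 * L * η ^ 2 / 2 := by
    have h3 : (s / 4) * ((1 - β) / 2) ≤ M * (1 - β - μ * M) :=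
      mul_le_mul hM4 (by linarith) (by positivity) hM0.le
    nlinarith
  have hlow : s / 18 ≤ M - C := by
    rw [hMC, le_div_iff₀ hDpos]
    nlinarith
  exact ⟨hM4, le_trans hMs (le_trans hsum1 (by
    apply div_le_div_of_nonneg_left hb.le (by positivity) (by linarith))), hC0, hlow,
    by linarith⟩
end
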